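/- arXiv:1302.5793 — 2 statements merged into one kernel-verified Lean document; each statement's English description precedes it below -/
import Mathlib

section
/- For odd n ≥ 5, the automaton 𝒢_n is synchronizing, the word a² (b a b a^{n-3})^{n-4} b a b a² of length n² - 4n + 7 is a reset word, and its reset threshold is exactly n² - 4n + 7. -/
/-- The state reached from `q` by reading the word `w`. -/
def run {Q A : Type*} (δ : Q → A → Q) (q : Q) (w : List A) : Q := w.foldl δ q

/-- The automaton `𝒢_n` on states `0,…,n-1` (paper's `1,…,n` shifted by one), a
coloring of the digraph `G_n`: the letter `a` (= `true`) sends `i ↦ i+1` for `i < n-3`,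
`n-3 ↦ 0`, `n-2 ↦ n-1`, `n-1 ↦ 2`; the letter `b` (= `false`) is the cyclic shift
`i ↦ i+1 (mod n)`. -/
def gAut (n : ℕ) (q : ZMod n) : Bool → ZMod n
  | true =>
      if q.val = n - 3 then 0
      else if q.val = n - 2 then ((n - 1 : ℕ) : ZMod n)
      else if q.val = n - 1 then 2
      else q + 1
  | false => q + 1

namespace GAux

theorem run_cons {Q A : Type*} (δ : Q → A → Q) (q : Q) (x : A) (v : List A) :
    run δ q (x :: v) = run δ (δ q x) v := rfl

theorem run_append {Q A : Type*} (δ : Q → A → Q) (q : Q) (v u : List A) :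
    run δ q (v ++ u) = run δ (run δ q v) u := List.foldl_append ..

theorem run_nil {Q A : Type*} (δ : Q → A → Q) (q : Q) : run δ q [] = q := rfl

variable {n : ℕ}

theorem cast_val [NeZero n] (q : ZMod n) : ((q.val : ℕ) : ZMod n) = q :=
  ZMod.natCast_rightInverse q

theorem val_add_one [NeZero n] {q : ZMod n} (h : q.val + 1 < n) : (q + 1).val = q.val + 1 := by
  conv_lhs => rw [← cast_val q]
  rw [show ((q.val : ℕ) : ZMod n) + 1 = ((q.val + 1 : ℕ) : ZMod n) by push_cast; ring,
    ZMod.val_cast_of_lt h]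

theorem add_one_eq_zero [NeZero n] {q : ZMod n} (h : q.val = n - 1) : q + 1 = 0 := by
  have h1 : (1:ℕ) ≤ n := Nat.one_le_iff_ne_zero.mpr (NeZero.ne n)
  have : q = ((n - 1 : ℕ) : ZMod n) := by rw [← cast_val q, h]
  rw [this, show ((n - 1 : ℕ) : ZMod n) + 1 = ((n - 1 + 1 : ℕ) : ZMod n) by push_cast; ring,
    show n - 1 + 1 = n by omega, ZMod.natCast_self]

theorem gAut_true (q : ZMod n) : gAut n q true =
    if q.val = n - 3 then 0
    else if q.val = n - 2 then ((n - 1 : ℕ) : ZMod n)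
    else if q.val = n - 1 then 2
    else q + 1 := rfl

theorem gAut_false (q : ZMod n) : gAut n q false = q + 1 := rfl

theorem two_val (hn : 5 ≤ n) : (2 : ZMod n).val = 2 := by
  rw [show (2 : ZMod n) = ((2 : ℕ) : ZMod n) by push_cast; ring, ZMod.val_cast_of_lt (by omega)]

theorem zero_val (hn : 5 ≤ n) : (0 : ZMod n).val = 0 := by
  haveI : NeZero n := ⟨by omega⟩; exact ZMod.val_zero

/-- value of an `a`-step from a generic state -/
theorem aStep (hn : 5 ≤ n) {q : ZMod n} (h : q.val + 4 ≤ n) : gAut n q true = q + 1 := by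
  rw [gAut_true, if_neg (by omega), if_neg (by omega), if_neg (by omega)]

/-- number of `a`-transitions taken at the special states `n-3`, `n-1` -/
def skips (n : ℕ) : List Bool → ZMod n → ℕ
  | [], _ => 0
  | x :: v, q => (if x = true ∧ (q.val = n - 3 ∨ q.val = n - 1) then 1 else 0)
      + skips n v (gAut n q x)

/-- number of `b`-transitions taken at the state `n-1` -/
def wraps (n : ℕ) : List Bool → ZMod n → ℕ
  | [], _ => 0
  | x :: v, q => (if x = false ∧ q.val = n - 1 then 1 else 0) + wraps n v (gAut n q x)

theorem skips_cons (n : ℕ) (x : Bool) (v : List Bool) (q : ZMod n) :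
    skips n (x :: v) q = (if x = true ∧ (q.val = n - 3 ∨ q.val = n - 1) then 1 else 0)
      + skips n v (gAut n q x) := rfl

theorem wraps_cons (n : ℕ) (x : Bool) (v : List Bool) (q : ZMod n) :
    wraps n (x :: v) q = (if x = false ∧ q.val = n - 1 then 1 else 0)
      + wraps n v (gAut n q x) := rfl

theorem step_eq (hn : 5 ≤ n) (q : ZMod n) (x : Bool) :
    1 + q.val = (if x = true ∧ (q.val = n - 3 ∨ q.val = n - 1) then 1 else 0) * (n - 2)
      + (gAut n q x).val + n * (if x = false ∧ q.val = n - 1 then 1 else 0) := by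
  haveI : NeZero n := ⟨by omega⟩
  have hv : q.val < n := ZMod.val_lt q
  cases x with
  | false =>
    have hA : (if (false = true ∧ (q.val = n - 3 ∨ q.val = n - 1)) then (1:ℕ) else 0) = 0 := by
      simp
    rw [hA, gAut_false]
    by_cases h : q.val = n - 1
    · have hB : (if (false = false ∧ q.val = n - 1) then (1:ℕ) else 0) = 1 := by simp [h]
      rw [hB, add_one_eq_zero h, zero_val hn]; omega
    · have hB : (if (false = false ∧ q.val = n - 1) then (1:ℕ) else 0) = 0 := by simp [h]
      rw [hB, val_add_one (by omega)]; omega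
  | true =>
    have hB : (if (true = false ∧ q.val = n - 1) then (1:ℕ) else 0) = 0 := by simp
    rw [hB, gAut_true]
    by_cases h3 : q.val = n - 3
    · have hA : (if (true = true ∧ (q.val = n - 3 ∨ q.val = n - 1)) then (1:ℕ) else 0) = 1 := by
        simp [h3]
      rw [hA, if_pos h3, zero_val hn]; omega
    · rw [if_neg h3]
      by_cases h2 : q.val = n - 2
      · have hA : (if (true = true ∧ (q.val = n - 3 ∨ q.val = n - 1)) then (1:ℕ) else 0) = 0 := by
          have : ¬(q.val = n - 3 ∨ q.val = n - 1) := by omega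
          simp [this]
        rw [hA, if_pos h2, ZMod.val_cast_of_lt (show n - 1 < n by omega)]; omega
      · rw [if_neg h2]
        by_cases h1 : q.val = n - 1
        · have hA : (if (true = true ∧ (q.val = n - 3 ∨ q.val = n - 1)) then (1:ℕ) else 0) = 1 := by
            simp [h1]
          rw [hA, if_pos h1, two_val hn]; omega
        · have hA : (if (true = true ∧ (q.val = n - 3 ∨ q.val = n - 1)) then (1:ℕ) else 0) = 0 := by
            have : ¬(q.val = n - 3 ∨ q.val = n - 1) := by omega
            simp [this]
          rw [hA, if_neg h1, val_add_one (by omega)]; omega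

/-- The master lemma: exact bookkeeping of length vs. skips, wraps and endpoints. -/
theorem master (hn : 5 ≤ n) : ∀ (v : List Bool) (q : ZMod n),
    v.length + q.val = skips n v q * (n - 2) + (run (gAut n) q v).val + n * wraps n v q := by
  intro v
  induction v with
  | nil => intro q; simp [skips, wraps, run_nil]
  | cons x v ih =>
    intro q
    have h1 := step_eq hn q x
    have h2 := ih (gAut n q x)
    rw [run_cons]
    simp only [skips, wraps, List.length_cons]
    rw [Nat.add_mul, Nat.mul_add]
    omega

/-- the only collision of the letter `a` is `{1, n-1} → 2`. -/
theorem collision (hn : 5 ≤ n) {y z : ZMod n} (hne : y ≠ z)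
    (h : gAut n y true = gAut n z true) : gAut n y true = 2 := by
  haveI : NeZero n := ⟨by omega⟩
  have hy : y.val < n := ZMod.val_lt y
  have hz : z.val < n := ZMod.val_lt z
  have hvne : y.val ≠ z.val := fun hc => hne (by rw [← cast_val y, ← cast_val z, hc])
  have hval : ∀ w : ZMod n, (gAut n w true).val =
      if w.val = n - 3 then 0
      else if w.val = n - 2 then n - 1
      else if w.val = n - 1 then 2
      else w.val + 1 := by
    intro w
    have hw : w.val < n := ZMod.val_lt w
    rw [gAut_true]
    by_cases h3 : w.val = n-3
    · simp only [if_pos h3]; exact zero_val hn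
    · by_cases h2 : w.val = n-2
      · simp only [if_neg h3, if_pos h2]; exact ZMod.val_cast_of_lt (by omega)
      · by_cases h1 : w.val = n-1
        · simp only [if_neg h3, if_neg h2, if_pos h1]; exact two_val hn
        · simp only [if_neg h3, if_neg h2, if_neg h1]; exact val_add_one (by omega)
  have hvv := congrArg ZMod.val h
  rw [hval y, hval z] at hvv
  by_cases hy1 : y.val = n - 1
  · rw [gAut_true, if_neg (by omega), if_neg (by omega), if_pos hy1]
  · by_cases hz1 : z.val = n - 1
    · rw [gAut_true]
      split_ifs at hvv ⊢ with a1 a2 a3 <;> try omega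
      · have hy1' : y.val = 1 := by omega
        rw [show y = ((1:ℕ) : ZMod n) by rw [← cast_val y, hy1']]
        push_cast; ring
    · exfalso; split_ifs at hvv <;> omega

/-- The lower bound. -/
theorem lower_bound (n : ℕ) (hodd : Odd n) (hn : 5 ≤ n) :
    ∀ L (v : List Bool), v.length = L → (∃ p : ZMod n, ∀ q, run (gAut n) q v = p) →
    n ^ 2 - 4 * n + 7 ≤ L := by
  obtain ⟨m, rfl⟩ : ∃ m, n = 2 * m + 5 := by
    obtain ⟨j, hj⟩ := hodd; exact ⟨j - 2, by omega⟩
  clear hodd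
  haveI : NeZero (2 * m + 5) := ⟨by omega⟩
  have hsq : (2*m+5) ^ 2 = 4*(m*m) + 20*m + 25 := by ring
  intro L
  induction L using Nat.strong_induction_on with
  | _ L IH =>
    intro v hlen hres
    obtain ⟨p, hp⟩ := hres
    by_contra hlt
    push_neg at hlt
    have hlt' : L ≤ 4*(m*m) + 12*m + 11 := by omega
    rcases List.eq_nil_or_concat v with rfl | ⟨v', x, rfl⟩
    · have h0 := hp 0; have h1 := hp 1
      rw [run_nil] at h0 h1
      have h01 : (0 : ZMod (2*m+5)) = 1 := h0.trans h1.symm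
      haveI : Fact (1 < 2*m+5) := ⟨by omega⟩
      have := congrArg ZMod.val h01
      rw [ZMod.val_zero, ZMod.val_one] at this
      omega
    · rw [List.concat_eq_append] at *
      have hL : v'.length + 1 = L := by rw [← hlen]; simp
      by_cases hconst : ∀ q : ZMod (2*m+5), run (gAut _) q v' = run (gAut _) 0 v'
      · have := IH v'.length (by omega) v' rfl ⟨run (gAut _) 0 v', hconst⟩
        omega
      · push_neg at hconst
        obtain ⟨u, hu⟩ := hconst
        have hyp : gAut _ (run (gAut _) u v') x = p := by
          rw [← hp u, run_append]; rfl
        have hzp : gAut _ (run (gAut _) 0 v') x = p := by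
          rw [← hp 0, run_append]; rfl
        have hp2 : p = 2 := by
          cases x with
          | false =>
            exfalso
            rw [gAut_false] at hyp hzp
            exact hu (by have := hyp.trans hzp.symm; exact add_right_cancel this)
          | true => rw [← hyp]; exact collision (by omega) hu (hyp.trans hzp.symm)
        subst hp2
        set w : List Bool := v' ++ [x] with hw
        clear_value w
        have hM : ∀ q : ZMod (2*m+5),
            L + q.val = skips _ w q * (2*m+3) + 2 + (2*m+5) * wraps _ w q := by
          intro q
          have h52 : 2*m+5-2 = 2*m+3 := by omega
          have hmq := master (n := 2*m+5) (by omega) w q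
          rw [hlen, hp q, two_val (by omega), h52] at hmq
          exact hmq
        set q1 : ZMod (2*m+5) := (4 : ZMod (2*m+5)) - (L : ℕ) with hq1
        set c1 := skips _ w q1 with hc1
        set k1 := wraps _ w q1 with hk1
        have E1 := hM q1
        rw [← hc1, ← hk1] at E1
        have hq1v : q1.val < 2*m+5 := ZMod.val_lt q1
        have hdvd : (2*m+5) ∣ (c1 + 1) := by
          have hz : ((2*m+5 : ℕ) : ZMod (2*m+5)) = 0 := ZMod.natCast_self _
          have hcast : ((2 * (c1+1) : ℕ) : ZMod (2*m+5)) = 0 := by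
            have hE := congrArg (fun t : ℕ => (t : ZMod (2*m+5))) E1
            push_cast at hE hz ⊢
            rw [cast_val q1, hq1] at hE
            linear_combination hE + ((c1 : ZMod (2*m+5)) + (k1 : ZMod (2*m+5))) * hz
          rw [ZMod.natCast_eq_zero_iff] at hcast
          have hcop : Nat.Coprime (2*m+5) 2 :=
            Nat.coprime_two_right.mpr ⟨m + 2, by ring⟩
          exact hcop.dvd_of_dvd_mul_left hcast
        obtain ⟨t, ht⟩ := hdvd
        have ht1 : t = 1 := by
          have h0 : t ≠ 0 := by rintro rfl; simp at ht
          by_contra hne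
          have h2 : 2 ≤ t := by omega
          have hle : (2*m+5) * 2 ≤ (2*m+5) * t := Nat.mul_le_mul_left _ h2
          have hr2 : (2*m+5) * 2 = 4*m + 10 := by ring
          have hc : 4*m + 9 ≤ c1 := by omega
          have hmul := Nat.mul_le_mul_right (2*m+3) hc
          have hr : (4*m+9) * (2*m+3) = 8*(m*m) + 30*m + 27 := by ring
          omega
        rw [ht1] at ht
        have hc1v : c1 = 2*m + 4 := by omega
        rw [hc1v] at E1
        have hr1 : (2*m+4) * (2*m+3) = 4*(m*m) + 14*m + 12 := by ring
        have hk10 : k1 = 0 := by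
          by_contra h
          have h1 : 1 ≤ k1 := by omega
          have hle : (2*m+5) * 1 ≤ (2*m+5) * k1 := Nat.mul_le_mul_left _ h1
          have hr2 : (2*m+5) * 1 = 2*m+5 := by ring
          omega
        rw [hk10, Nat.mul_zero] at E1
        have hE1' : L + q1.val = 4*(m*m) + 14*m + 14 := by omega
        have hq1big : 2*m+3 ≤ q1.val := by omega
        set q2 : ZMod (2*m+5) := ((q1.val - 2 : ℕ) : ZMod (2*m+5)) with hq2
        have hq2v : q2.val = q1.val - 2 := ZMod.val_cast_of_lt (by omega)
        set c2 := skips _ w q2 with hc2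
        set k2 := wraps _ w q2 with hk2
        have E2 := hM q2
        rw [← hc2, ← hk2, hq2v] at E2
        have hE2' : c2 * (2*m+3) + (2*m+5) * k2 = 4*(m*m) + 14*m + 10 := by omega
        have hc20 : c2 = 0 := by
          have hd2 : (2*m+5) ∣ c2 * (2*m+3) := by
            have h1 : (2*m+5) ∣ (4*(m*m) + 14*m + 10) := ⟨2*m+2, by ring⟩
            have h2 : (2*m+5) ∣ (2*m+5) * k2 := Dvd.intro k2 rfl
            have h3 : c2 * (2*m+3) = (4*(m*m) + 14*m + 10) - (2*m+5) * k2 := by omega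
            rw [h3]; exact Nat.dvd_sub h1 h2
          have hcop : Nat.Coprime (2*m+5) (2*m+3) := by
            have hd1 := Nat.gcd_dvd_left (2*m+5) (2*m+3)
            have hdr := Nat.gcd_dvd_right (2*m+5) (2*m+3)
            have hg2 : Nat.gcd (2*m+5) (2*m+3) ∣ 2 := by
              have hsub := Nat.dvd_sub hd1 hdr
              rw [show 2*m+5 - (2*m+3) = 2 from by omega] at hsub
              exact hsub
            rcases (Nat.dvd_prime Nat.prime_two).mp hg2 with h | h
            · exact h
            · exfalso; rw [h] at hdr; obtain ⟨e, he⟩ := hdr; omega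
          obtain ⟨d, hd⟩ := hcop.dvd_of_dvd_mul_right hd2
          rcases Nat.eq_zero_or_pos d with h0 | h0
          · rw [h0] at hd; simpa using hd
          · exfalso
            have hle : (2*m+5) * 1 ≤ (2*m+5) * d := Nat.mul_le_mul_left _ h0
            have hr2 : (2*m+5) * 1 = 2*m+5 := by ring
            have hcd : 2*m+5 ≤ c2 := by omega
            have hmul := Nat.mul_le_mul_right (2*m+3) hcd
            have hr : (2*m+5) * (2*m+3) = 4*(m*m) + 16*m + 15 := by ring
            omega
        have hcase : q1.val = 2*m+4 ∨ q1.val = 2*m+3 := by omega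
        rcases hcase with hq1c | hq1c
        · -- q1 = n-1 : first letter must be a, giving q2 = n-3 a skip
          have hLval : L = 4*(m*m) + 12*m + 10 := by omega
          rcases v' with _ | ⟨x0, rest⟩
          · simp at hL; omega
          · have hwc : w = x0 :: (rest ++ [x]) := by rw [hw]; rfl
            have hx0 : x0 = true := by
              by_contra hx
              have hx0f : x0 = false := by simpa using hx
              have hk : k1 ≥ 1 := by
                rw [hk1, hwc, wraps_cons, if_pos ⟨hx0f, show q1.val = 2*m+5-1 by omega⟩]
                omega
              omega
            have hcc : c2 ≥ 1 := by
              rw [hc2, hwc, hx0, skips_cons,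
                if_pos ⟨rfl, Or.inl (show q2.val = 2*m+5-3 by omega)⟩]
              omega
            omega
        · -- q1 = n-2 : second letter must be a, giving q2 = n-4 → n-3 a skip
          have hLval : L = 4*(m*m) + 12*m + 11 := by omega
          rcases v' with _ | ⟨x0, rest⟩
          · simp at hL; omega
          rcases rest with _ | ⟨x1, rest2⟩
          · simp at hL; omega
          have hwc : w = x0 :: x1 :: (rest2 ++ [x]) := by rw [hw]; rfl
          have hs1 : (gAut _ q1 x0).val = 2*m+4 := by
            cases x0 with
            | false => rw [gAut_false, val_add_one (by omega)]; omega
            | true =>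
              rw [gAut_true, if_neg (by omega), if_pos (show q1.val = 2*m+5-2 by omega),
                ZMod.val_cast_of_lt (by omega)]
              omega
          have hx1 : x1 = true := by
            by_contra hx
            have hx1f : x1 = false := by simpa using hx
            have hk : k1 ≥ 1 := by
              rw [hk1, hwc, wraps_cons, wraps_cons,
                if_neg (show ¬(x0 = false ∧ q1.val = 2*m+5-1) from
                  fun hcon => absurd hcon.2 (by omega)),
                if_pos ⟨hx1f, show (gAut _ q1 x0).val = 2*m+5-1 by omega⟩]
              omega
            omega
          have hs2 : (gAut _ q2 x0).val = 2*m+2 := by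
            cases x0 with
            | false => rw [gAut_false, val_add_one (by omega)]; omega
            | true =>
              rw [gAut_true, if_neg (by omega), if_neg (by omega), if_neg (by omega),
                val_add_one (by omega)]
              omega
          have hcc : c2 ≥ 1 := by
            rw [hc2, hwc, skips_cons, skips_cons,
              if_neg (show ¬(x0 = true ∧ (q2.val = 2*m+5-3 ∨ q2.val = 2*m+5-1)) from
                fun hcon => absurd hcon.2 (by omega)),
              if_pos (show x1 = true ∧ ((gAut _ q2 x0).val = 2*m+5-3 ∨
                  (gAut _ q2 x0).val = 2*m+5-1) from ⟨hx1, Or.inl (by omega)⟩)]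
            omega
          omega

/-! ### Upper bound : the explicit word is a reset word -/

theorem runA (hn : 5 ≤ n) : ∀ (k : ℕ) (q : ZMod n), q.val + k ≤ n - 3 →
    run (gAut n) q (List.replicate k true) = ((q.val + k : ℕ) : ZMod n) := by
  haveI : NeZero n := ⟨by omega⟩
  intro k
  induction k with
  | zero => intro q h; rw [List.replicate_zero, run_nil, Nat.add_zero, cast_val]
  | succ k ih =>
    intro q h
    have hv : q.val < n := ZMod.val_lt q
    rw [List.replicate_succ, run_cons, aStep hn (by omega)]
    have h1 : (q+1).val = q.val + 1 := val_add_one (by omega)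
    rw [ih (q+1) (by omega), h1]
    congr 1
    omega

theorem runA_skip (hn : 5 ≤ n) (q : ZMod n) (h1 : 1 ≤ q.val) (h2 : q.val ≤ n - 3) :
    run (gAut n) q (List.replicate (n-3) true) = ((q.val - 1 : ℕ) : ZMod n) := by
  haveI : NeZero n := ⟨by omega⟩
  have hsplit : List.replicate (n-3) (true : Bool)
      = List.replicate (n-3-q.val) true ++ (true :: List.replicate (q.val-1) true) := by
    calc List.replicate (n-3) (true:Bool)
        = List.replicate ((n-3-q.val) + (q.val-1+1)) true := by
          rw [show n-3-q.val + (q.val-1+1) = n-3 by omega]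
      _ = _ := by rw [List.replicate_add, List.replicate_succ]
  rw [hsplit, run_append, runA hn _ q (by omega),
    show q.val + (n-3-q.val) = n-3 from by omega, run_cons, gAut_true,
    if_pos (ZMod.val_cast_of_lt (show n-3 < n by omega))]
  have h0 : (0 : ZMod n).val = 0 := zero_val hn
  rw [runA hn (q.val-1) 0 (by omega), h0]
  congr 1
  omega

theorem runA_skipB (hn : 5 ≤ n) (q : ZMod n) (h : q.val = n - 2) :
    run (gAut n) q (List.replicate (n-3) true) = ((n-3 : ℕ) : ZMod n) := by
  haveI : NeZero n := ⟨by omega⟩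
  have hv : q.val < n := ZMod.val_lt q
  have hrep : List.replicate (n-3) (true:Bool) = true :: true :: List.replicate (n-5) true := by
    rw [← List.replicate_succ, ← List.replicate_succ, show n-5+1+1 = n-3 by omega]
  have hv1 : ((n-1:ℕ) : ZMod n).val = n - 1 := ZMod.val_cast_of_lt (by omega)
  have s1 : gAut n q true = ((n-1:ℕ) : ZMod n) := by
    rw [gAut_true, if_neg (by omega), if_pos h]
  have s2 : gAut n ((n-1:ℕ) : ZMod n) true = 2 := by
    rw [gAut_true, if_neg (by omega), if_neg (by omega), if_pos hv1]
  rw [hrep, run_cons, s1, run_cons, s2,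
    runA hn (n-5) 2 (by rw [two_val hn]; omega), two_val hn]
  congr 1
  omega

/-- one block of the reset word -/
def blockW (n : ℕ) : List Bool := [false, true, false] ++ List.replicate (n - 3) true

theorem run_block (q : ZMod n) : run (gAut n) q (blockW n) =
    run (gAut n) (gAut n (gAut n (gAut n q false) true) false)
      (List.replicate (n-3) true) := rfl

theorem blockP2 (hn : 7 ≤ n) {q : ZMod n} (h : q.val + 6 ≤ n) :
    run (gAut n) q (blockW n) = ((q.val + 2 : ℕ) : ZMod n) := by
  haveI : NeZero n := ⟨by omega⟩
  have h1 : (q+1).val = q.val + 1 := val_add_one (by omega)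
  have s2 : gAut n (q+1) true = q+1+1 := aStep (by omega) (by omega)
  have h2 : (q+1+1).val = q.val + 2 := by rw [val_add_one (by omega), h1]
  have h3 : (q+1+1+1).val = q.val + 3 := by rw [val_add_one (by omega), h2]
  rw [run_block, gAut_false q, s2, gAut_false,
    runA_skip (by omega) _ (by omega) (by omega), h3]
  congr 1

theorem blockP2' (hn : 7 ≤ n) {q : ZMod n} (h : q.val = n-5) :
    run (gAut n) q (blockW n) = ((n-3 : ℕ) : ZMod n) := by
  haveI : NeZero n := ⟨by omega⟩
  have h1 : (q+1).val = q.val + 1 := val_add_one (by omega)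
  have s2 : gAut n (q+1) true = q+1+1 := aStep (by omega) (by omega)
  have h2 : (q+1+1).val = q.val + 2 := by rw [val_add_one (by omega), h1]
  have h3 : (q+1+1+1).val = q.val + 3 := by rw [val_add_one (by omega), h2]
  rw [run_block, gAut_false q, s2, gAut_false, runA_skipB (by omega) _ (by omega)]

theorem blockP3 (hn : 7 ≤ n) {q : ZMod n} (h : q.val = n-4) :
    run (gAut n) q (blockW n) = ((0 : ℕ) : ZMod n) := by
  haveI : NeZero n := ⟨by omega⟩
  have h1 : (q+1).val = n - 3 := by rw [val_add_one (by omega)]; omega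
  have s2 : gAut n (q+1) true = 0 := by rw [gAut_true, if_pos h1]
  have h0 : (0 : ZMod n).val = 0 := zero_val (by omega)
  have h3 : ((0:ZMod n)+1).val = 1 := by rw [val_add_one (by omega)]; omega
  rw [run_block, gAut_false q, s2, gAut_false,
    runA_skip (by omega) _ (by omega) (by omega), h3]

theorem blockP1 (hn : 7 ≤ n) {q : ZMod n} (h : q.val = n-3) :
    run (gAut n) q (blockW n) = ((n-3 : ℕ) : ZMod n) := by
  haveI : NeZero n := ⟨by omega⟩
  have h1 : (q+1).val = n - 2 := by rw [val_add_one (by omega)]; omega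
  have hv1 : ((n-1:ℕ) : ZMod n).val = n - 1 := ZMod.val_cast_of_lt (by omega)
  have s2 : gAut n (q+1) true = ((n-1:ℕ) : ZMod n) := by
    rw [gAut_true, if_neg (by omega), if_pos h1]
  rw [run_block, gAut_false q, s2, gAut_false, add_one_eq_zero hv1,
    runA (by omega) (n-3) 0 (by rw [zero_val (by omega)]; omega), zero_val (by omega)]
  congr 1
  omega

def blocksW (n k : ℕ) : List Bool := (List.replicate k (blockW n)).flatten

theorem run_blocks_succ (q : ZMod n) (k : ℕ) :
    run (gAut n) q (blocksW n (k+1)) = run (gAut n) (run (gAut n) q (blockW n)) (blocksW n k) := by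
  rw [blocksW, List.replicate_succ, List.flatten_cons, run_append]; rfl

theorem run_blocks_add (q : ZMod n) (a b : ℕ) :
    run (gAut n) q (blocksW n (a+b))
      = run (gAut n) (run (gAut n) q (blocksW n a)) (blocksW n b) := by
  rw [blocksW, List.replicate_add, List.flatten_append, run_append]; rfl

theorem blocks_fix (hn : 7 ≤ n) : ∀ k : ℕ,
    run (gAut n) ((n-3 : ℕ) : ZMod n) (blocksW n k) = ((n-3 : ℕ) : ZMod n) := by
  intro k
  induction k with
  | zero => rfl
  | succ k ih =>
    rw [run_blocks_succ, blockP1 hn (ZMod.val_cast_of_lt (show n-3 < n by omega)), ih]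

theorem blocks_climb (hn : 7 ≤ n) : ∀ (k t : ℕ), t + 2*k ≤ n-4 →
    run (gAut n) ((t : ℕ) : ZMod n) (blocksW n k) = ((t + 2*k : ℕ) : ZMod n) := by
  haveI : NeZero n := ⟨by omega⟩
  intro k
  induction k with
  | zero => intro t h; rw [show t + 2*0 = t by omega]; rfl
  | succ k ih =>
    intro t h
    have hval : ((t:ℕ) : ZMod n).val = t := ZMod.val_cast_of_lt (by omega)
    rw [run_blocks_succ, blockP2 hn (by rw [hval]; omega), hval, ih (t+2) (by omega)]
    congr 1
    omega

/-- full run of the n-4 blocks from any state with val ≤ n-3. -/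
theorem blocks_full (m : ℕ) {q : ZMod (2*m+7)} (h : q.val ≤ 2*m+4) :
    run (gAut (2*m+7)) q (blocksW (2*m+7) (2*m+3)) =
      (if q.val = 1 then ((2*m+2 : ℕ) : ZMod (2*m+7)) else ((2*m+4 : ℕ) : ZMod (2*m+7))) := by
  have hn : 7 ≤ 2*m+7 := by omega
  haveI : NeZero (2*m+7) := ⟨by omega⟩
  have hq : q = ((q.val : ℕ) : ZMod (2*m+7)) := (cast_val q).symm
  have h53 : 2*m+7-3 = 2*m+4 := by omega
  have h55 : 2*m+7-5 = 2*m+2 := by omega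
  have h54 : 2*m+7-4 = 2*m+3 := by omega
  rcases Nat.even_or_odd' q.val with ⟨i, hi | hi⟩
  · -- even
    rw [if_neg (by omega)]
    rcases Nat.eq_or_lt_of_le (show i ≤ m+2 by omega) with he | hlt2
    · -- q.val = 2m+4 = n-3
      have hqe : q = ((2*m+7-3 : ℕ) : ZMod (2*m+7)) := by rw [hq]; congr 1; omega
      rw [hqe, blocks_fix hn, h53]
    · -- i ≤ m+1 : climb to n-5, jump to n-3, stay
      have hdec : 2*m+3 = (m+1-i) + (1 + (m+1+i)) := by omega
      rw [hdec, run_blocks_add, hq, blocks_climb hn (m+1-i) q.val (by omega),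
        show q.val + 2*(m+1-i) = 2*m+2 from by omega]
      rw [show 1 + (m+1+i) = (m+1+i) + 1 from by omega, run_blocks_succ,
        blockP2' hn (by rw [ZMod.val_cast_of_lt (show 2*m+2 < 2*m+7 by omega)]; omega),
        blocks_fix hn, h53]
  · -- odd : q.val = 2i+1, i ≤ m+1
    have hile : i ≤ m+1 := by omega
    have hdec : 2*m+3 = (m+1-i) + (1 + (m+1+i)) := by omega
    rw [hdec, run_blocks_add, hq, blocks_climb hn (m+1-i) q.val (by omega),
      show q.val + 2*(m+1-i) = 2*m+3 from by omega,
      show 1 + (m+1+i) = (m+1+i) + 1 from by omega, run_blocks_succ,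
      blockP3 hn (by rw [ZMod.val_cast_of_lt (show 2*m+3 < 2*m+7 by omega)]; omega)]
    rw [ZMod.val_cast_of_lt (show q.val < 2*m+7 from ZMod.val_lt q)]
    rcases i with _ | j
    · rw [if_pos (show q.val = 1 by omega), blocks_climb hn (m+1+0) 0 (by omega)]
      congr 1
      omega
    · rw [if_neg (show ¬(q.val = 1) by omega), show m+1+(j+1) = (m+1) + (1 + j) from by omega,
        run_blocks_add, blocks_climb hn (m+1) 0 (by omega),
        show (0:ℕ) + 2*(m+1) = 2*m+2 from by omega,
        show 1 + j = j + 1 from by omega, run_blocks_succ,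
        blockP2' hn (by rw [ZMod.val_cast_of_lt (show 2*m+2 < 2*m+7 by omega)]; omega),
        blocks_fix hn, h53]

theorem run_aa (hn : 7 ≤ n) (q : ZMod n) : ∃ t : ℕ,
    run (gAut n) q [true, true] = ((t : ℕ) : ZMod n) ∧ t ≤ n-3 ∧ (t = 1 ↔ q.val = n-3) := by
  haveI : NeZero n := ⟨by omega⟩
  have hv : q.val < n := ZMod.val_lt q
  have hrun : run (gAut n) q [true, true] = gAut n (gAut n q true) true := rfl
  by_cases h3 : q.val = n-3
  · refine ⟨1, ?_, by omega, by omega⟩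
    have s1 : gAut n q true = 0 := by rw [gAut_true, if_pos h3]
    rw [hrun, s1, aStep (by omega) (by rw [zero_val (by omega)]; omega)]
    push_cast
    ring
  · by_cases h2 : q.val = n-2
    · refine ⟨2, ?_, by omega, by omega⟩
      have s1 : gAut n q true = ((n-1:ℕ) : ZMod n) := by
        rw [gAut_true, if_neg h3, if_pos h2]
      have s2 : gAut n ((n-1:ℕ) : ZMod n) true = 2 := by
        rw [gAut_true, if_neg (by rw [ZMod.val_cast_of_lt (show n-1<n by omega)]; omega),
          if_neg (by rw [ZMod.val_cast_of_lt (show n-1<n by omega)]; omega),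
          if_pos (ZMod.val_cast_of_lt (show n-1<n by omega))]
      rw [hrun, s1, s2]
      push_cast
      ring
    · by_cases h1 : q.val = n-1
      · refine ⟨3, ?_, by omega, by omega⟩
        have s1 : gAut n q true = 2 := by rw [gAut_true, if_neg h3, if_neg h2, if_pos h1]
        rw [hrun, s1, aStep (by omega) (by rw [two_val (by omega)]; omega)]
        push_cast
        ring
      · by_cases h4 : q.val = n-4
        · refine ⟨0, ?_, by omega, by omega⟩
          have hval1 : (q+1).val = n-3 := by rw [val_add_one (by omega)]; omega
          have s2 : gAut n (q+1) true = 0 := by rw [gAut_true, if_pos hval1]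
          rw [hrun, aStep (q := q) (by omega) (by omega), s2]
          push_cast
          ring
        · refine ⟨q.val + 2, ?_, by omega, by omega⟩
          have hval1 : (q+1).val = q.val+1 := val_add_one (by omega)
          have s2 : gAut n (q+1) true = q+1+1 := aStep (by omega) (by omega)
          have hcast : ((q.val + 2 : ℕ) : ZMod n) = q + 2 := by push_cast; rw [cast_val q]
          rw [hrun, aStep (q := q) (by omega) (by omega), s2, hcast]
          ring

theorem run_tail3 (hn : 7 ≤ n) :
    run (gAut n) ((n-3 : ℕ) : ZMod n) [false, true, false, true, true] = 2 := by
  haveI : NeZero n := ⟨by omega⟩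
  have hrun : run (gAut n) ((n-3 : ℕ) : ZMod n) [false, true, false, true, true]
      = gAut n (gAut n (gAut n (gAut n (gAut n ((n-3 : ℕ) : ZMod n) false) true) false) true) true
      := rfl
  have hv3 : ((n-3:ℕ) : ZMod n).val = n-3 := ZMod.val_cast_of_lt (by omega)
  have hv1 : ((n-1:ℕ) : ZMod n).val = n-1 := ZMod.val_cast_of_lt (by omega)
  have h1 : (((n-3:ℕ) : ZMod n)+1).val = n-2 := by rw [val_add_one (by omega)]; omega
  have s2 : gAut n (((n-3:ℕ) : ZMod n)+1) true = ((n-1:ℕ) : ZMod n) := by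
    rw [gAut_true, if_neg (by omega), if_pos h1]
  have s4 : gAut n (0 : ZMod n) true = 0+1 := aStep (by omega) (by rw [zero_val (by omega)]; omega)
  have h4 : ((0:ZMod n)+1).val = 1 := by rw [val_add_one (by rw [zero_val (by omega)]; omega)]; rw [zero_val (by omega)]
  have s5 : gAut n ((0:ZMod n)+1) true = 0+1+1 := aStep (by omega) (by omega)
  rw [hrun, gAut_false (((n-3:ℕ)) : ZMod n), s2, gAut_false (((n-1:ℕ)) : ZMod n),
    add_one_eq_zero hv1, s4, s5]
  norm_num

theorem run_tail5 (hn : 7 ≤ n) :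
    run (gAut n) ((n-5 : ℕ) : ZMod n) [false, true, false, true, true] = 2 := by
  haveI : NeZero n := ⟨by omega⟩
  have hrun : run (gAut n) ((n-5 : ℕ) : ZMod n) [false, true, false, true, true]
      = gAut n (gAut n (gAut n (gAut n (gAut n ((n-5 : ℕ) : ZMod n) false) true) false) true) true
      := rfl
  have hv5 : ((n-5:ℕ) : ZMod n).val = n-5 := ZMod.val_cast_of_lt (by omega)
  have hv1' : ((n-1:ℕ) : ZMod n).val = n-1 := ZMod.val_cast_of_lt (by omega)
  have h1 : (((n-5:ℕ) : ZMod n)+1).val = n-4 := by rw [val_add_one (by omega)]; omega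
  have s2 : gAut n (((n-5:ℕ) : ZMod n)+1) true = ((n-5:ℕ) : ZMod n)+1+1 :=
    aStep (by omega) (by omega)
  have h2 : (((n-5:ℕ) : ZMod n)+1+1).val = n-3 := by rw [val_add_one (by omega)]; omega
  have h3 : (((n-5:ℕ) : ZMod n)+1+1+1).val = n-2 := by rw [val_add_one (by omega)]; omega
  have s4 : gAut n (((n-5:ℕ) : ZMod n)+1+1+1) true = ((n-1:ℕ) : ZMod n) := by
    rw [gAut_true, if_neg (by omega), if_pos h3]
  have s5 : gAut n ((n-1:ℕ) : ZMod n) true = 2 := by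
    rw [gAut_true, if_neg (by omega), if_neg (by omega), if_pos hv1']
  rw [hrun, gAut_false (((n-5:ℕ)) : ZMod n), s2, gAut_false ((((n-5:ℕ)) : ZMod n)+1+1), s4, s5]

theorem upper_general (m : ℕ) (q : ZMod (2*m+7)) :
    run (gAut (2*m+7)) q
      ([true, true] ++ blocksW (2*m+7) (2*m+3) ++ [false, true, false, true, true]) = 2 := by
  have hn : 7 ≤ 2*m+7 := by omega
  haveI : NeZero (2*m+7) := ⟨by omega⟩
  rw [run_append, run_append]
  obtain ⟨t, ht, htle, hiff⟩ := run_aa hn q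
  rw [ht]
  have hval : ((t : ℕ) : ZMod (2*m+7)).val = t := ZMod.val_cast_of_lt (by omega)
  rw [blocks_full m (by rw [hval]; omega), hval]
  by_cases h1 : t = 1
  · rw [if_pos h1, show (2*m+2 : ℕ) = 2*m+7-5 from by omega]
    exact run_tail5 hn
  · rw [if_neg h1, show (2*m+4 : ℕ) = 2*m+7-3 from by omega]
    exact run_tail3 hn

theorem word_length (n : ℕ) (hn : 5 ≤ n) :
    ([true, true] ++ (List.replicate (n-4)
        ([false, true, false] ++ List.replicate (n-3) true)).flatten
      ++ [false, true, false, true, true]).length = n^2 - 4*n + 7 := by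
  rw [List.length_append, List.length_append, List.length_flatten]
  simp only [List.map_replicate, List.length_append, List.length_replicate,
    List.length_cons, List.length_nil, List.sum_replicate, smul_eq_mul]
  obtain ⟨m, rfl⟩ : ∃ m, n = m + 5 := ⟨n - 5, by omega⟩
  have h1 : m+5-3 = m+2 := by omega
  have h2 : m+5-4 = m+1 := by omega
  have h3 : (m+5)^2 = m*m + 10*m + 25 := by ring
  have h4 : (m+1) * (3 + (m+2)) = m*m + 6*m + 5 := by ring
  rw [h1, h2, h3, h4]
  omega

end GAux


/-- For odd `n ≥ 5`, the automaton `𝒢_n` is synchronizing, the word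
`a² (b a b a^{n-3})^{n-4} b a b a²` of length `n² - 4n + 7` is a reset word for it,
and its reset threshold is exactly `n² - 4n + 7`. -/
theorem stmt_18 (n : ℕ) (hodd : Odd n) (hn : 5 ≤ n) :
    let w : List Bool := [true, true] ++
      (List.replicate (n - 4) ([false, true, false] ++ List.replicate (n - 3) true)).flatten
      ++ [false, true, false, true, true]
    w.length = n ^ 2 - 4 * n + 7 ∧
    (∃ p : ZMod n, ∀ q, run (gAut n) q w = p) ∧
    (∀ v : List Bool, (∃ p : ZMod n, ∀ q, run (gAut n) q v = p) →
      n ^ 2 - 4 * n + 7 ≤ v.length) := by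
  intro w
  refine ⟨GAux.word_length n hn, ?_, ?_⟩
  · obtain ⟨j, hj⟩ := hodd
    rcases (show n = 5 ∨ 7 ≤ n from by omega) with h5 | h7
    · subst h5
      refine ⟨2, ?_⟩
      show ∀ q : ZMod 5, run (gAut 5) q ([true, true] ++
        (List.replicate (5 - 4) ([false, true, false] ++ List.replicate (5 - 3) true)).flatten
        ++ [false, true, false, true, true]) = 2
      decide
    · obtain ⟨m, rfl⟩ : ∃ m, n = 2*m+7 := ⟨j - 3, by omega⟩
      exact ⟨2, fun q => GAux.upper_general m q⟩
  · intro v hres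
    exact GAux.lower_bound n hodd hn v.length v rfl hres
end

section
/- A string [s₀, …, s_{nk-1}] of numbers from {0, 1, …, n-1} is the canonical string of an initially-connected n-state automaton with k ordered input letters if and only if: (R1) for each i with s_i > 1 there exists j < i with s_j = s_i - 1, and (R2) for each m with 1 ≤ m < n there exists j < mk with s_j = m. -/
/-- Bijective base-`k` encoding of words over the ordered alphabet `Fin k`.
It is a bijection `List (Fin k) ≃ ℕ` under which the shortlex order
(first by length, then lexicographically by the letter order) corresponds to the
usual order on `ℕ`. -/
def enc {k : ℕ} (w : List (Fin k)) : ℕ :=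
  w.foldl (fun m c => m * k + c.val + 1) 0

/-- The shortlex-least access word from `q0` to `q`, encoded as a natural number. -/
noncomputable def bfsKey {n k : ℕ} (δ : Fin n → Fin k → Fin n) (q0 q : Fin n) : ℕ :=
  sInf {m : ℕ | ∃ w : List (Fin k), enc w = m ∧ run δ q0 w = q}

/-- The breadth-first-search number of the state `q` (for an initially-connected
automaton, states are discovered by breadth-first search from `q0`, scanning letters
in order, exactly in the order of their shortlex-least access words): the number of
states whose least access word is shortlex-smaller. -/
noncomputable def bfsNum {n k : ℕ} (δ : Fin n → Fin k → Fin n) (q0 q : Fin n) : ℕ :=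
  Nat.card {q' : Fin n // bfsKey δ q0 q' < bfsKey δ q0 q}

lemma run_concat {Q A : Type*} (δ : Q → A → Q) (q : Q) (u : List A) (a : A) :
    run δ q (u ++ [a]) = δ (run δ q u) a := by
  unfold run; rw [List.foldl_append]; rfl

lemma enc_concat {k : ℕ} (u : List (Fin k)) (j : Fin k) :
    enc (u ++ [j]) = enc u * k + j.val + 1 := by
  unfold enc; rw [List.foldl_append]; rfl

lemma enc_eq_zero {k : ℕ} (w : List (Fin k)) (h : enc w = 0) : w = [] := by
  induction w using List.reverseRecOn with
  | nil => rfl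
  | append_singleton u j ih => rw [enc_concat] at h; omega

lemma enc_injective {k : ℕ} : Function.Injective (enc (k := k)) := by
  intro w1 w2 h
  induction w1 using List.reverseRecOn generalizing w2 with
  | nil => exact (enc_eq_zero w2 h.symm).symm
  | append_singleton u j ih =>
    induction w2 using List.reverseRecOn with
    | nil => exact absurd (enc_eq_zero _ h) (by simp)
    | append_singleton u' j' _ =>
      rw [enc_concat, enc_concat] at h
      have hj := j.isLt; have hj' := j'.isLt
      have h1 : enc u = enc u' := by nlinarith
      have h2 : j.val = j'.val := by nlinarith
      rw [ih h1, Fin.ext h2]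

section Key
variable {n k : ℕ} {δ : Fin n → Fin k → Fin n} {q0 : Fin n}

lemma key_le {q : Fin n} {w : List (Fin k)} (hw : run δ q0 w = q) :
    bfsKey δ q0 q ≤ enc w :=
  Nat.sInf_le ⟨w, rfl, hw⟩

lemma key_q0 : bfsKey δ q0 q0 = 0 :=
  Nat.le_antisymm (key_le (w := []) rfl) (Nat.zero_le _)

variable (hconn : ∀ q : Fin n, ∃ w : List (Fin k), run δ q0 w = q)
include hconn

lemma key_mem (q : Fin n) :
    ∃ w : List (Fin k), enc w = bfsKey δ q0 q ∧ run δ q0 w = q := by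
  obtain ⟨w, hw⟩ := hconn q
  have hne : {m : ℕ | ∃ w : List (Fin k), enc w = m ∧ run δ q0 w = q}.Nonempty :=
    ⟨enc w, w, rfl, hw⟩
  exact Nat.sInf_mem hne

lemma key_inj : Function.Injective (bfsKey δ q0) := by
  intro a b h
  obtain ⟨w1, hw1, hr1⟩ := key_mem hconn a
  obtain ⟨w2, hw2, hr2⟩ := key_mem hconn b
  have : w1 = w2 := enc_injective (by rw [hw1, hw2, h])
  rw [← hr1, ← hr2, this]

lemma key_trans_le (q : Fin n) (i : Fin k) :
    bfsKey δ q0 (δ q i) ≤ bfsKey δ q0 q * k + i.val + 1 := by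
  obtain ⟨w, hw, hr⟩ := key_mem hconn q
  have h : run δ q0 (w ++ [i]) = δ q i := by rw [run_concat, hr]
  calc bfsKey δ q0 (δ q i) ≤ enc (w ++ [i]) := key_le h
    _ = _ := by rw [enc_concat, hw]

lemma key_step {q : Fin n} (hq : q ≠ q0) :
    ∃ (p : Fin n) (j : Fin k), δ p j = q ∧
      bfsKey δ q0 q = bfsKey δ q0 p * k + j.val + 1 := by
  obtain ⟨w, hw, hr⟩ := key_mem hconn q
  induction w using List.reverseRecOn with
  | nil =>
    simp only [run, List.foldl_nil] at hr
    exact (hq hr.symm).elim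
  | append_singleton u j _ =>
    rw [run_concat] at hr
    refine ⟨run δ q0 u, j, hr, ?_⟩
    have h1 : bfsKey δ q0 q = enc u * k + j.val + 1 := by rw [← hw, enc_concat]
    have h2 : bfsKey δ q0 (run δ q0 u) ≤ enc u := key_le rfl
    have h3 : bfsKey δ q0 q ≤ bfsKey δ q0 (run δ q0 u) * k + j.val + 1 := by
      rw [← hr]; exact key_trans_le hconn _ j
    have h4 := Nat.mul_le_mul_right k h2
    omega

end Key

section Num
variable {n k : ℕ} {δ : Fin n → Fin k → Fin n} {q0 : Fin n}

lemma num_eq_ncard (q : Fin n) :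
    bfsNum δ q0 q = Set.ncard {q' : Fin n | bfsKey δ q0 q' < bfsKey δ q0 q} :=
  (Nat.card_coe_set_eq _).symm ▸ rfl

lemma num_lt (hn : 0 < n) (q : Fin n) : bfsNum δ q0 q < n := by
  rw [num_eq_ncard]
  have h : {q' : Fin n | bfsKey δ q0 q' < bfsKey δ q0 q} ⊂ Set.univ := by
    rw [Set.ssubset_univ_iff]
    intro h
    have : q ∈ {q' : Fin n | bfsKey δ q0 q' < bfsKey δ q0 q} := h ▸ Set.mem_univ q
    exact absurd this (by simp)
  calc Set.ncard _ < Set.ncard (Set.univ : Set (Fin n)) :=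
        Set.ncard_lt_ncard h Set.finite_univ
    _ = n := by rw [Set.ncard_univ, Nat.card_eq_fintype_card, Fintype.card_fin]

lemma num_q0 : bfsNum δ q0 q0 = 0 := by
  rw [num_eq_ncard, key_q0]
  convert Set.ncard_empty (Fin n)
  simp

variable (hconn : ∀ q : Fin n, ∃ w : List (Fin k), run δ q0 w = q)
include hconn

lemma num_lt_of_key_lt {a b : Fin n} (h : bfsKey δ q0 a < bfsKey δ q0 b) :
    bfsNum δ q0 a < bfsNum δ q0 b := by
  rw [num_eq_ncard, num_eq_ncard]
  refine Set.ncard_lt_ncard ⟨fun x hx => lt_trans hx h, fun hsub => ?_⟩ (Set.toFinite _)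
  exact absurd (hsub h) (by simp)

lemma num_lt_iff {a b : Fin n} :
    bfsNum δ q0 a < bfsNum δ q0 b ↔ bfsKey δ q0 a < bfsKey δ q0 b := by
  refine ⟨fun h => ?_, num_lt_of_key_lt hconn⟩
  rcases lt_trichotomy (bfsKey δ q0 a) (bfsKey δ q0 b) with h' | h' | h'
  · exact h'
  · rw [key_inj hconn h'] at h; omega
  · exact absurd (num_lt_of_key_lt hconn h') (by omega)

lemma num_inj : Function.Injective (bfsNum δ q0) := by
  intro a b h
  by_contra hne
  rcases lt_trichotomy (bfsKey δ q0 a) (bfsKey δ q0 b) with h' | h' | h'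
  · have := num_lt_of_key_lt hconn h'; omega
  · exact hne (key_inj hconn h')
  · have := num_lt_of_key_lt hconn h'; omega

lemma num_surj (hn : 0 < n) (m : ℕ) (hm : m < n) : ∃ q : Fin n, bfsNum δ q0 q = m := by
  have hbij : Function.Bijective (fun q : Fin n => (⟨bfsNum δ q0 q, num_lt hn q⟩ : Fin n)) := by
    rw [Fintype.bijective_iff_injective_and_card]
    exact ⟨fun a b h => num_inj hconn (by simpa [Fin.ext_iff] using h), rfl⟩
  obtain ⟨q, hq⟩ := hbij.2 ⟨m, hm⟩
  exact ⟨q, by simpa [Fin.ext_iff] using hq⟩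

end Num

/-- First position of value `v` in the string determined by `s`. -/
noncomputable def fpos {n k : ℕ} (s : Fin n → Fin k → Fin n) (v : ℕ) : ℕ :=
  sInf {x : ℕ | ∃ (p : Fin n) (j : Fin k), (s p j).val = v ∧ p.val * k + j.val = x}

section Fpos
variable {n k : ℕ} {s : Fin n → Fin k → Fin n}

lemma fpos_le {v : ℕ} {p : Fin n} {j : Fin k} (h : (s p j).val = v) :
    fpos s v ≤ p.val * k + j.val :=
  Nat.sInf_le ⟨p, j, h, rfl⟩

variable (hR2 : ∀ m : Fin n, 1 ≤ m.val →
    ∃ (m' : Fin n) (i' : Fin k),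
      m'.val * k + i'.val < m.val * k ∧ (s m' i').val = m.val)
include hR2

lemma fpos_lt {v : ℕ} (hv1 : 1 ≤ v) (hvn : v < n) : fpos s v < v * k := by
  obtain ⟨m', i', hpos, hval⟩ := hR2 ⟨v, hvn⟩ hv1
  exact lt_of_le_of_lt (fpos_le hval) hpos

lemma fpos_mem {v : ℕ} (hv1 : 1 ≤ v) (hvn : v < n) :
    ∃ (p : Fin n) (j : Fin k), (s p j).val = v ∧ p.val * k + j.val = fpos s v := by
  obtain ⟨m', i', hpos, hval⟩ := hR2 ⟨v, hvn⟩ hv1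
  have hne : {x : ℕ | ∃ (p : Fin n) (j : Fin k), (s p j).val = v ∧ p.val * k + j.val = x}.Nonempty :=
    ⟨m'.val * k + i'.val, m', i', hval, rfl⟩
  exact Nat.sInf_mem hne

variable (hR1 : ∀ (m : Fin n) (i : Fin k), 1 < (s m i).val →
    ∃ (m' : Fin n) (i' : Fin k),
      m'.val * k + i'.val < m.val * k + i.val ∧ (s m' i').val = (s m i).val - 1)
include hR1

lemma fpos_succ_lt {v : ℕ} (hv1 : 1 ≤ v) (hvn : v + 1 < n) :
    fpos s v < fpos s (v + 1) := by
  obtain ⟨p, j, hval, hpos⟩ := fpos_mem hR2 (by omega) hvn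
  obtain ⟨m', i', hpos', hval'⟩ := hR1 p j (by omega)
  have : fpos s v ≤ m'.val * k + i'.val := fpos_le (by omega)
  omega

lemma fpos_mono {a b : ℕ} (ha : 1 ≤ a) (hab : a < b) (hbn : b < n) :
    fpos s a < fpos s b := by
  induction b, hab using Nat.le_induction with
  | base => exact fpos_succ_lt hR2 hR1 ha hbn
  | succ b hab ih =>
    exact lt_trans (ih (by omega)) (fpos_succ_lt hR2 hR1 (by omega) hbn)

end Fpos

/-- A string `[s₀, …, s_{nk-1}]` over `{0,…,n-1}` (given as `s : Fin n → Fin k → Fin n`,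
the entry at position `m·k + i` being `s m i`) is the canonical string of an
initially-connected `n`-state automaton with `k` ordered input letters iff
(R1) for each position with entry `> 1` some earlier position carries the entry
minus one, and (R2) for each state number `1 ≤ m < n`, the entry `m` occurs at some
position `< m·k`.  "Canonical string of `(δ, q0)`" means: the entry at the position
of (BFS number of `q`, letter `i`) is the BFS number of `δ q i`. -/
theorem stmt_19 (n k : ℕ) (hn : 0 < n) (hk : 0 < k) (s : Fin n → Fin k → Fin n) :
    ((∀ (m : Fin n) (i : Fin k), 1 < (s m i).val →
        ∃ (m' : Fin n) (i' : Fin k),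
          m'.val * k + i'.val < m.val * k + i.val ∧ (s m' i').val = (s m i).val - 1) ∧
     (∀ m : Fin n, 1 ≤ m.val →
        ∃ (m' : Fin n) (i' : Fin k),
          m'.val * k + i'.val < m.val * k ∧ (s m' i').val = m.val))
    ↔ ∃ (δ : Fin n → Fin k → Fin n) (q0 : Fin n),
        (∀ q : Fin n, ∃ w : List (Fin k), run δ q0 w = q) ∧
        (∀ (q : Fin n) (i : Fin k) (h : bfsNum δ q0 q < n),
          (s ⟨bfsNum δ q0 q, h⟩ i).val = bfsNum δ q0 (δ q i)) := by
  constructor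
  · -- forward direction
    rintro ⟨hR1, hR2⟩
    set q0 : Fin n := ⟨0, hn⟩ with hq0
    -- reachability
    have hreach : ∀ v : ℕ, (hv : v < n) → ∃ w, run s q0 w = ⟨v, hv⟩ := by
      intro v
      induction v using Nat.strong_induction_on with
      | _ v ih =>
        intro hv
        rcases Nat.eq_zero_or_pos v with rfl | hv1
        · exact ⟨[], rfl⟩
        · obtain ⟨m', i', hpos, hval⟩ := hR2 ⟨v, hv⟩ hv1
          have hpos' : m'.val * k + i'.val < v * k := hpos
          have hm' : m'.val < v := by
            by_contra hc
            have : v * k ≤ m'.val * k := Nat.mul_le_mul_right k (by omega)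
            omega
          obtain ⟨w, hw⟩ := ih m'.val hm' m'.isLt
          refine ⟨w ++ [i'], ?_⟩
          rw [run_concat]
          have hw' : run s q0 w = m' := hw
          rw [hw']
          exact Fin.ext hval
    have hconn : ∀ q : Fin n, ∃ w : List (Fin k), run s q0 w = q := by
      intro q
      obtain ⟨w, hw⟩ := hreach q.val q.isLt
      exact ⟨w, hw⟩
    -- BFS numbering is the identity
    have hid : ∀ v : ℕ, (hv : v < n) → bfsNum s q0 ⟨v, hv⟩ = v := by
      intro v
      induction v using Nat.strong_induction_on with
      | _ v ih =>
        intro hv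
        rcases Nat.eq_zero_or_pos v with rfl | hv1
        · exact num_q0
        -- N ⟨v⟩ ≥ v
        have hge : v ≤ bfsNum s q0 ⟨v, hv⟩ := by
          by_contra hc
          have h1 := ih _ (by omega : bfsNum s q0 ⟨v, hv⟩ < v) (by omega)
          have h2 : (⟨bfsNum s q0 ⟨v, hv⟩, by omega⟩ : Fin n) = ⟨v, hv⟩ :=
            num_inj hconn h1
          have := congrArg Fin.val h2
          simp at this
          omega
        rcases Nat.lt_or_ge v (bfsNum s q0 ⟨v, hv⟩) with hgt | hle
        · -- contradiction case
          exfalso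
          obtain ⟨r, hr⟩ := num_surj hconn hn v hv
          have hrv : v < r.val := by
            rcases Nat.lt_trichotomy r.val v with h | h | h
            · have := ih r.val h r.isLt
              rw [show (⟨r.val, r.isLt⟩ : Fin n) = r from rfl] at this
              omega
            · have hre : r = ⟨v, hv⟩ := Fin.ext h
              rw [hre] at hr; omega
            · exact h
          have hKrm : bfsKey s q0 r < bfsKey s q0 ⟨v, hv⟩ :=
            (num_lt_iff hconn).mp (by omega)
          -- first position of value v
          obtain ⟨Pm, Im, hPval, hPpos⟩ := fpos_mem hR2 hv1 hv
          have hFm_lt : fpos s v < v * k := fpos_lt hR2 hv1 hv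
          have hPm_lt : Pm.val < v := by
            by_contra hc
            have : v * k ≤ Pm.val * k := Nat.mul_le_mul_right k (by omega)
            omega
          have hKm_le : bfsKey s q0 ⟨v, hv⟩ ≤ bfsKey s q0 Pm * k + Im.val + 1 := by
            have := key_trans_le hconn Pm Im
            rwa [show s Pm Im = ⟨v, hv⟩ from Fin.ext hPval] at this
          -- r's minimal incoming transition
          have hrne : r ≠ q0 := by
            intro h
            rw [h] at hr
            rw [num_q0] at hr
            omega
          obtain ⟨p', j', hp'val, hKr⟩ := key_step hconn hrne
          have hKp'r : bfsKey s q0 p' < bfsKey s q0 r := by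
            have : bfsKey s q0 p' * 1 ≤ bfsKey s q0 p' * k :=
              Nat.mul_le_mul_left _ hk
            omega
          have hNp' : bfsNum s q0 p' < v := by
            have := (num_lt_iff hconn).mpr hKp'r
            omega
          have hp'id : p'.val = bfsNum s q0 p' := by
            have h1 := ih _ hNp' (lt_trans hNp' hv)
            have h2 : (⟨bfsNum s q0 p', _⟩ : Fin n) = p' := num_inj hconn h1
            have := congrArg Fin.val h2
            simpa using this.symm
          have hPmid : bfsNum s q0 Pm = Pm.val := by
            have := ih Pm.val hPm_lt Pm.isLt
            rwa [show (⟨Pm.val, Pm.isLt⟩ : Fin n) = Pm from rfl] at this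
          -- key comparison
          have hcmp : bfsKey s q0 p' * k + j'.val < bfsKey s q0 Pm * k + Im.val := by
            omega
          have hKple : bfsKey s q0 p' ≤ bfsKey s q0 Pm := by
            by_contra hc
            have : (bfsKey s q0 Pm + 1) * k ≤ bfsKey s q0 p' * k :=
              Nat.mul_le_mul_right k (by omega)
            have hIm := Im.isLt
            rw [add_mul] at this
            omega
          have hposlt : p'.val * k + j'.val < fpos s v := by
            rcases Nat.lt_or_ge (bfsKey s q0 p') (bfsKey s q0 Pm) with hlt | hge'
            · -- p' < Pm
              have : bfsNum s q0 p' < bfsNum s q0 Pm := (num_lt_iff hconn).mpr hlt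
              have hplt : p'.val < Pm.val := by omega
              have : (p'.val + 1) * k ≤ Pm.val * k := Nat.mul_le_mul_right k (by omega)
              have hj' := j'.isLt
              rw [add_mul] at this
              omega
            · -- equal keys: p' = Pm
              have heq : p' = Pm := key_inj hconn (by omega)
              have hj'Im : j'.val < Im.val := by
                rw [heq] at hcmp; omega
              rw [heq]
              omega
          -- but fpos of r.val is larger than fpos of v
          have h1 : fpos s r.val ≤ p'.val * k + j'.val :=
            fpos_le (by rw [hp'val])
          have h2 : fpos s v < fpos s r.val := fpos_mono hR2 hR1 hv1 hrv r.isLt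
          omega
        · omega
    refine ⟨s, q0, hconn, ?_⟩
    intro q i h
    have hq : bfsNum s q0 q = q.val := by
      have := hid q.val q.isLt
      rw [show (⟨q.val, q.isLt⟩ : Fin n) = q from rfl] at this
      exact this
    have heq : (⟨bfsNum s q0 q, h⟩ : Fin n) = q := Fin.ext hq
    rw [heq]
    have h2 := hid (s q i).val (s q i).isLt
    simp only [Fin.eta] at h2
    exact h2.symm
  · -- backward direction
    rintro ⟨δ, q0, hconn, hs⟩
    constructor
    · -- R1
      intro m i hmi
      obtain ⟨q, hq⟩ := num_surj hconn hn m.val m.isLt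
      have hqm : (⟨bfsNum δ q0 q, num_lt hn q⟩ : Fin n) = m := Fin.ext (by simpa using hq)
      have hv : (s m i).val = bfsNum δ q0 (δ q i) := by
        rw [← hqm]; exact hs q i (num_lt hn q)
      set v := (s m i).val with hvdef
      have hv2 : 1 < v := hmi
      have hvn : v < n := (s m i).isLt
      obtain ⟨r', hr'⟩ := num_surj hconn hn (v - 1) (by omega)
      have hr'ne : r' ≠ q0 := by
        intro h; rw [h, num_q0] at hr'; omega
      obtain ⟨p, j, hpj, hKr'⟩ := key_step hconn hr'ne
      have hKr'r : bfsKey δ q0 r' < bfsKey δ q0 (δ q i) := by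
        refine (num_lt_iff hconn).mp ?_
        rw [hr', ← hv]
        omega
      have hKle : bfsKey δ q0 (δ q i) ≤ bfsKey δ q0 q * k + i.val + 1 :=
        key_trans_le hconn q i
      have hcmp : bfsKey δ q0 p * k + j.val < bfsKey δ q0 q * k + i.val := by omega
      have hKpq : bfsKey δ q0 p ≤ bfsKey δ q0 q := by
        by_contra hc
        have : (bfsKey δ q0 q + 1) * k ≤ bfsKey δ q0 p * k :=
          Nat.mul_le_mul_right k (by omega)
        have hi := i.isLt
        rw [add_mul] at this
        omega
      refine ⟨⟨bfsNum δ q0 p, num_lt hn p⟩, j, ?_, ?_⟩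
      · -- position
        show bfsNum δ q0 p * k + j.val < m.val * k + i.val
        rcases Nat.lt_or_ge (bfsKey δ q0 p) (bfsKey δ q0 q) with hlt | hge
        · have hNlt : bfsNum δ q0 p < bfsNum δ q0 q := (num_lt_iff hconn).mpr hlt
          have : (bfsNum δ q0 p + 1) * k ≤ m.val * k :=
            Nat.mul_le_mul_right k (by omega)
          have hj := j.isLt
          rw [add_mul] at this
          omega
        · have heq : p = q := key_inj hconn (by omega)
          have : j.val < i.val := by rw [heq] at hcmp; omega
          rw [heq, hq]
          omega
      · -- value
        have := hs p j (num_lt hn p)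
        rw [this, hpj, hr']
    · -- R2
      intro m hm
      obtain ⟨q, hq⟩ := num_surj hconn hn m.val m.isLt
      have hqne : q ≠ q0 := by
        intro h; rw [h, num_q0] at hq; omega
      obtain ⟨p, j, hpj, hKq⟩ := key_step hconn hqne
      have hKpq : bfsKey δ q0 p < bfsKey δ q0 q := by
        have : bfsKey δ q0 p * 1 ≤ bfsKey δ q0 p * k := Nat.mul_le_mul_left _ hk
        omega
      have hNlt : bfsNum δ q0 p < m.val := by
        have := (num_lt_iff hconn).mpr hKpq
        omega
      refine ⟨⟨bfsNum δ q0 p, num_lt hn p⟩, j, ?_, ?_⟩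
      · show bfsNum δ q0 p * k + j.val < m.val * k
        have : (bfsNum δ q0 p + 1) * k ≤ m.val * k := Nat.mul_le_mul_right k (by omega)
        have hj := j.isLt
        rw [add_mul] at this
        omega
      · have := hs p j (num_lt hn p)
        rw [this, hpj, hq]
end
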